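/- arXiv:2402.14011 — 2 statements merged into one kernel-verified Lean document; each statement's English description precedes it below -/
import Mathlib

section
/- Let G be a group, K ≤ G a subgroup, and g ∈ G. Let V be a representation of K over a commutative ring R. Then the map sending f : K g K → V (supported on the double coset, left-K-equivariant in the appropriate sense) to the function h : K → V defined by h(x) = f(g x) gives an R[K]-module isomorphism between Ind_K^{K g K} V (functions on K g K that transform by V under left K-translation, with right K-action) and Ind_{K ∩ g^{-1} K g}^{K} V^{(g)}, where V^{(g)} is the K ∩ g^{-1}Kg-representation in which x acts by g x g^{-1}. -/
/-!
A function on `K g K` transforming on the left by `ρ` is determined by its values on the coset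
`g K`, through `f (k g k') = ρ k (f (g k'))`. Conversely a function `h` on `K` extends by this
formula, and the extension is well defined exactly because `h` transforms by `V^{(g)}`: if
`k g k' = a g b` then `c := b k'⁻¹` satisfies `g c g⁻¹ = a⁻¹ k ∈ K`, so
`h b = ρ (a⁻¹ k) (h k')`.
-/

namespace DoubleCosetInduction

variable {R G V : Type*} [CommSemiring R] [Group G] [AddCommMonoid V] [Module R V]
  {K : Subgroup G} (ρ : Representation R K V) (g : G)

/-- `Ind_K^{K g K} V`. -/
def induced : Set (G → V) := {f |
  (∀ x : G, f x ≠ 0 → ∃ k k' : K, x = (k : G) * g * (k' : G)) ∧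
  ∀ (k : K) (x : G), f ((k : G) * x) = ρ k (f x)}

/-- `Ind_{K ∩ g⁻¹Kg}^K V^{(g)}`. -/
def conjInduced : Set (K → V) := {h |
  ∀ (c x : K) (hc : (g : G) * (c : G) * (g : G)⁻¹ ∈ K),
    h (c * x) = ρ ⟨(g : G) * (c : G) * (g : G)⁻¹, hc⟩ (h x)}

variable {ρ g}

theorem apply_mul_mul_of_mem_induced {f : G → V} (hf : f ∈ induced ρ g) (k k' : K) :
    f ((k : G) * g * k') = ρ k (f (g * k')) := by
  rw [mul_assoc, hf.2]

theorem mapsTo_induced :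
    Set.MapsTo (fun (f : G → V) (x : K) => f (g * x)) (induced ρ g) (conjInduced ρ g) := by
  intro f hf c x hc
  have hcx : g * ((c * x : K) : G) = ((⟨g * c * g⁻¹, hc⟩ : K) : G) * (g * x) := by
    push_cast; group
  exact (congrArg f hcx).trans (hf.2 _ _)

theorem injOn_induced :
    Set.InjOn (fun (f : G → V) (x : K) => f (g * x)) (induced ρ g) := by
  intro f₁ hf₁ f₂ hf₂ hΦ
  funext x
  by_cases hx : ∃ k k' : K, x = (k : G) * g * k'
  · obtain ⟨k, k', rfl⟩ := hx
    rw [apply_mul_mul_of_mem_induced hf₁, apply_mul_mul_of_mem_induced hf₂]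
    exact congrArg (ρ k) (congrFun hΦ k')
  · rw [not_imp_comm.mp (hf₁.1 x) hx, not_imp_comm.mp (hf₂.1 x) hx]

theorem map_apply_eq_of_mem_conjInduced {h : K → V} (hh : h ∈ conjInduced ρ g) {k k' a b : K}
    (hkab : (k : G) * g * k' = a * g * b) : ρ k (h k') = ρ a (h b) := by
  have hconj : g * ((b * k'⁻¹ : K) : G) * g⁻¹ = ((a⁻¹ * k : K) : G) := by
    push_cast
    calc g * (b * (k' : G)⁻¹) * g⁻¹ = (a : G)⁻¹ * (a * g * b) * (k' : G)⁻¹ * g⁻¹ := by group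
      _ = (a : G)⁻¹ * k := by rw [← hkab]; group
  have hb : h b = ρ (a⁻¹ * k) (h k') := by
    have := hh (b * k'⁻¹) k' (hconj ▸ (a⁻¹ * k).2)
    rwa [inv_mul_cancel_right, show (⟨_, _⟩ : K) = a⁻¹ * k from Subtype.ext hconj] at this
  rw [hb, ← Module.End.mul_apply, ← map_mul, mul_inv_cancel_left]

variable (ρ g) in
noncomputable def extend (h : K → V) (x : G) : V :=
  open Classical in
  if hx : ∃ k k' : K, x = (k : G) * g * k' then ρ hx.choose (h hx.choose_spec.choose) else 0

theorem extend_mul_mul {h : K → V} (hh : h ∈ conjInduced ρ g) (k k' : K) :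
    extend ρ g h ((k : G) * g * k') = ρ k (h k') := by
  have hx : ∃ a b : K, (k : G) * g * k' = a * g * b := ⟨k, k', rfl⟩
  rw [extend, dif_pos hx]
  exact (map_apply_eq_of_mem_conjInduced hh hx.choose_spec.choose_spec).symm

theorem extend_of_not_mem {h : K → V} {x : G} (hx : ¬∃ k k' : K, x = (k : G) * g * k') :
    extend ρ g h x = 0 :=
  dif_neg hx

theorem extend_mem_induced {h : K → V} (hh : h ∈ conjInduced ρ g) :
    extend ρ g h ∈ induced ρ g := by
  refine ⟨fun x hx => not_imp_comm.mp extend_of_not_mem hx, fun k x => ?_⟩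
  by_cases hx : ∃ a b : K, x = (a : G) * g * b
  · obtain ⟨a, b, rfl⟩ := hx
    have hkx : (k : G) * (a * g * b) = ((k * a : K) : G) * g * b := by push_cast; group
    rw [hkx, extend_mul_mul hh, extend_mul_mul hh, map_mul, Module.End.mul_apply]
  · have hkx : ¬∃ a b : K, (k : G) * x = (a : G) * g * b := by
      rintro ⟨a, b, hab⟩
      refine hx ⟨k⁻¹ * a, b, ?_⟩
      rw [← inv_mul_cancel_left (k : G) x, hab]
      push_cast; group
    rw [extend_of_not_mem hx, extend_of_not_mem hkx, map_zero]

theorem surjOn_induced :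
    Set.SurjOn (fun (f : G → V) (x : K) => f (g * x)) (induced ρ g) (conjInduced ρ g) := by
  intro h hh
  refine ⟨extend ρ g h, extend_mem_induced hh, funext fun x => ?_⟩
  have hx : g * (x : G) = ((1 : K) : G) * g * x := by push_cast; group
  simp only [hx, extend_mul_mul hh, map_one, Module.End.one_apply]

theorem bijOn_induced :
    Set.BijOn (fun (f : G → V) (x : K) => f (g * x)) (induced ρ g) (conjInduced ρ g) :=
  ⟨mapsTo_induced, injOn_induced, surjOn_induced⟩

end DoubleCosetInduction

open DoubleCosetInduction in
/-- Mackey-type isomorphism for a double coset: the map `f ↦ (x ↦ f(g·x))` is an `R`-linear,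
right-`K`-equivariant bijection from the space of functions supported on `K g K` that
transform on the left by the `K`-representation `(V, ρ)`, onto the space
`Ind_{K ∩ g⁻¹Kg}^{K} V^{(g)}`, where in `V^{(g)}` an element `c ∈ K ∩ g⁻¹Kg` acts via
`ρ(g c g⁻¹)`. -/
theorem stmt9 {R : Type*} [CommRing R] {G : Type*} [Group G] (K : Subgroup G) (g : G)
    {V : Type*} [AddCommGroup V] [Module R V] (ρ : Representation R K V) :
    let S1 : Set (G → V) := {f |
      (∀ x : G, f x ≠ 0 → ∃ k k' : K, x = (k : G) * g * (k' : G)) ∧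
      ∀ (k : K) (x : G), f ((k : G) * x) = ρ k (f x)}
    let S2 : Set (K → V) := {h |
      ∀ (c x : K) (hc : (g : G) * (c : G) * (g : G)⁻¹ ∈ K),
        h (c * x) = ρ ⟨(g : G) * (c : G) * (g : G)⁻¹, hc⟩ (h x)}
    let Φ : (G → V) → (K → V) := fun f x => f (g * (x : G))
    Set.BijOn Φ S1 S2 ∧
    (∀ f₁ f₂ : G → V, Φ (f₁ + f₂) = Φ f₁ + Φ f₂) ∧
    (∀ (r : R) (f : G → V), Φ (r • f) = r • Φ f) ∧
    (∀ (f : G → V) (k' : K), Φ (fun x => f (x * (k' : G))) = fun x => Φ f (x * k')) :=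
  ⟨bijOn_induced (ρ := ρ), fun _ _ => rfl, fun _ _ => rfl,
    fun f k' => funext fun x => congrArg f (mul_assoc g x k')⟩
end

section
/- Let F be a field and n ≥ 2. Inside F[x_1^{±1}, x_2^{±1}, ..., x_n^{±1}], for each 1 ≤ i ≤ n−1 let A_i := F[x_1^{±1},...,x_{i−1}^{±1}, x_i, (x_i x_{i+1})^{±1}, x_{i+2}^{±1},...,x_n^{±1}] be the subalgebra generated by the indicated elements and their listed inverses. Then the intersection ∩_{i=1}^{n−1} A_i equals F[y_1, y_2, ..., y_{n−1}, y_n^{±1}], where y_i = x_1 x_2 ⋯ x_i. -/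
/-!
Every algebra in sight is spanned by the monomials it contains, and the algebra generated by
monomials `x^ν`, `ν ∈ T`, is spanned by the monomials whose exponents lie in the additive monoid
generated by `T`. So everything happens on exponents: the generators of `A_i` generate the monoid
`{μ | μ_{i+1} ≤ μ_i}`, these intersect to the cone of antitone `μ`, and that cone is generated by
the exponents of `y_1, …, y_n, y_n⁻¹` by Abel summation
`μ = ∑ i, (μ i - μ (i + 1)) • prefixExponent i` with `μ n := 0`, in which only the coefficient of
the exponent of `y_n` can be negative.
-/

namespace AddMonoidAlgebra

theorem span_setOf_single_one_eq_supported {R G : Type*} [Semiring R] (P : G → Prop) :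
    Submodule.span R {l : R[G] | ∃ μ, P μ ∧ l = single μ 1} = supported R R {μ | P μ} := by
  rw [supported_eq_span_single]
  congr 1
  ext l
  simp [eq_comm]

variable {R G : Type*} [CommSemiring R] [AddMonoid G]

theorem toSubmodule_adjoin_single_one_image (T : Set G) :
    Subalgebra.toSubmodule (Algebra.adjoin R ((single · (1 : R)) '' T)) =
      supported R R (AddSubmonoid.closure T) := by
  have h : (single · (1 : R)) '' T = of R G '' (Multiplicative.toAdd ⁻¹' T) := by
    ext; simp [of_apply]
  rw [Algebra.adjoin_eq_span, supported_eq_span_single, h, ← MonoidHom.map_mclosure,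
    Submonoid.coe_map, ← AddSubmonoid.toSubmonoid_closure]
  congr 1

theorem mem_adjoin_single_one_image {T : Set G} {z : R[G]} :
    z ∈ Algebra.adjoin R ((single · (1 : R)) '' T) ↔
      ↑z.coeff.support ⊆ (AddSubmonoid.closure T : Set G) := by
  rw [← Subalgebra.mem_toSubmodule, toSubmodule_adjoin_single_one_image, mem_supported]

end AddMonoidAlgebra

namespace AddSubmonoid

variable {G : Type*} [AddGroup G] {S : AddSubmonoid G} {ν : G}

theorem zsmul_mem_of_nonneg (h : ν ∈ S) {m : ℤ} (hm : 0 ≤ m) : m • ν ∈ S := by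
  lift m to ℕ using hm
  rw [natCast_zsmul]
  exact nsmul_mem h m

theorem zsmul_mem_of_neg_mem (h : ν ∈ S) (h' : -ν ∈ S) (m : ℤ) : m • ν ∈ S := by
  obtain ⟨k, rfl | rfl⟩ := Int.eq_nat_or_neg m
  · exact zsmul_mem_of_nonneg h k.cast_nonneg
  · rw [neg_zsmul, ← zsmul_neg]
    exact zsmul_mem_of_nonneg h' k.cast_nonneg

end AddSubmonoid

theorem Fin.antitone_iff_mk_succ_le {α : Type*} [Preorder α] {n : ℕ} {f : Fin n → α} :
    Antitone f ↔ ∀ (i : Fin n) (h : (i : ℕ) + 1 < n), f ⟨i + 1, h⟩ ≤ f i := by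
  cases n with
  | zero => exact ⟨fun _ i => i.elim0, fun _ i => i.elim0⟩
  | succ m =>
    rw [Fin.antitone_iff_succ_le]
    exact ⟨fun hf i _ => hf ⟨i, by omega⟩, fun hf i => hf i.castSucc (by simp)⟩

open Finsupp AddSubmonoid

theorem Finsupp.mem_closure_of_forall_single_mem {ι : Type*} {T : Set (ι →₀ ℤ)} {ν : ι →₀ ℤ}
    (h : ∀ j ∈ ν.support, single j 1 ∈ closure T ∧ single j (-1) ∈ closure T) :
    ν ∈ closure T := by
  rw [← ν.sum_single]
  refine AddSubmonoidClass.finsuppSum_mem _ _ _ fun j hj => ?_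
  rw [← smul_single_one]
  exact zsmul_mem_of_neg_mem (h j (mem_support_iff.2 hj)).1
    (by simpa using (h j (mem_support_iff.2 hj)).2) _

section Generators

variable {ι : Type*} (i i' : ι)

def generatorExponents : Set (ι →₀ ℤ) :=
  {ν | ∃ j, j ≠ i ∧ j ≠ i' ∧ (ν = single j 1 ∨ ν = single j (-1))} ∪ {single i 1} ∪
    {single i 1 + single i' 1, single i (-1) + single i' (-1)}

variable {i i'}

theorem coe_closure_generatorExponents (hne : i ≠ i') :
    (closure (generatorExponents i i') : Set (ι →₀ ℤ)) = {μ | μ i' ≤ μ i} := by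
  apply subset_antisymm
  · intro μ hμ
    induction hμ using closure_induction with
    | mem ν hν =>
      rcases hν with (⟨j, hji, hji', rfl | rfl⟩ | rfl) | rfl | rfl <;>
        simp [*]
    | zero => simp
    | add μ₁ μ₂ _ _ h₁ h₂ =>
      show (μ₁ + μ₂) i' ≤ (μ₁ + μ₂) i
      rw [Finsupp.add_apply, Finsupp.add_apply]
      exact add_le_add h₁ h₂
  · intro μ (hμ : μ i' ≤ μ i)
    obtain ⟨k, hk⟩ := Int.eq_ofNat_of_zero_le (sub_nonneg.2 hμ)
    -- `μ = ν + k • eᵢ + μ i' • (eᵢ + eᵢ')` with `ν` vanishing at `i` and `i'`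
    set ν := μ - (k • single i 1 + μ i' • (single i 1 + single i' 1)) with hν
    have hνi : ν i = 0 := by simp [hν, hne]; omega
    have hνi' : ν i' = 0 := by simp [hν, hne.symm]
    have hgen : ∀ ν' ∈ generatorExponents i i', ν' ∈ closure (generatorExponents i i') :=
      fun _ h => AddSubmonoid.subset_closure h
    rw [← sub_add_cancel μ (k • single i 1 + μ i' • (single i 1 + single i' 1)), ← hν]
    refine add_mem (mem_closure_of_forall_single_mem fun j hj => ?_) (add_mem ?_ ?_)
    · have hji : j ≠ i := by rintro rfl; simp_all
      have hji' : j ≠ i' := by rintro rfl; simp_all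
      exact ⟨hgen _ (.inl (.inl ⟨j, hji, hji', .inl rfl⟩)),
        hgen _ (.inl (.inl ⟨j, hji, hji', .inr rfl⟩))⟩
    · exact nsmul_mem (hgen _ (.inl (.inr rfl))) k
    · refine zsmul_mem_of_neg_mem (hgen _ (.inr (.inl rfl))) ?_ _
      rw [neg_add, ← single_neg, ← single_neg]
      exact hgen _ (.inr (.inr rfl))

theorem image_single_one_generatorExponents {R : Type*} [Semiring R] (i i' : ι) :
    (AddMonoidAlgebra.single · (1 : R)) '' generatorExponents i i' =
      {l | ∃ j, j ≠ i ∧ j ≠ i' ∧ (l = AddMonoidAlgebra.single (single j 1) 1 ∨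
        l = AddMonoidAlgebra.single (single j (-1)) 1)} ∪
        {AddMonoidAlgebra.single (single i 1) 1} ∪
        {AddMonoidAlgebra.single (single i 1) 1 * AddMonoidAlgebra.single (single i' 1) 1,
          AddMonoidAlgebra.single (single i (-1)) 1 *
            AddMonoidAlgebra.single (single i' (-1)) 1} := by
  simp only [generatorExponents, Set.image_union, Set.image_singleton, Set.image_insert_eq,
    AddMonoidAlgebra.single_mul_single, one_mul]
  congr 2
  ext l
  simp only [Set.mem_image, Set.mem_ofPred_eq]
  grind

end Generators

section Prefix

variable {n : ℕ}

noncomputable def prefixExponent (i : Fin n) : Fin n →₀ ℤ :=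
  ∑ j ∈ Finset.univ.filter (fun j : Fin n => (j : ℕ) ≤ (i : ℕ)), single j 1

theorem prefixExponent_apply (i k : Fin n) :
    prefixExponent i k = if (k : ℕ) ≤ i then 1 else 0 := by
  simp [prefixExponent, finsetSum_apply, single_apply]

theorem antitone_prefixExponent (i : Fin n) : Antitone (prefixExponent i : Fin n → ℤ) := by
  intro a b hab
  simp only [prefixExponent_apply]
  have : (a : ℕ) ≤ b := hab
  split_ifs <;> omega

theorem prefixExponent_of_not_lt {i : Fin n} (hi : ¬(i : ℕ) + 1 < n) :
    prefixExponent i = ∑ j : Fin n, single j 1 := by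
  rw [prefixExponent, Finset.filter_true_of_mem fun j _ => by omega]

theorem exists_eq_sum_smul_prefixExponent {μ : Fin n →₀ ℤ} (hμ : Antitone (μ : Fin n → ℤ)) :
    ∃ c : Fin n → ℤ, (∀ i : Fin n, (i : ℕ) + 1 < n → 0 ≤ c i) ∧
      μ = ∑ i, c i • prefixExponent i := by
  let M : ℕ → ℤ := fun t => if h : t < n then μ ⟨t, h⟩ else 0
  refine ⟨fun i => M i - M (i + 1), fun i hi => ?_, ?_⟩
  · simp only [M, dif_pos i.isLt, dif_pos hi, sub_nonneg]
    exact hμ (Fin.mk_le_mk.2 (Nat.le_succ _))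
  · ext k
    have hM : ∀ t ∈ Finset.Ico (k : ℕ) n, M t - M (t + 1) = -(M (t + 1) - M t) :=
      fun t _ => (neg_sub _ _).symm
    have hIco : (Finset.range n).filter (fun t => (k : ℕ) ≤ t) = Finset.Ico (k : ℕ) n := by
      ext t; simp only [Finset.mem_filter, Finset.mem_range, Finset.mem_Ico]; omega
    simp only [finsetSum_apply, Finsupp.smul_apply, prefixExponent_apply, smul_eq_mul, mul_ite,
      mul_one, mul_zero]
    rw [Fin.sum_univ_eq_sum_range (fun t => if (k : ℕ) ≤ t then M t - M (t + 1) else 0),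
      ← Finset.sum_filter, hIco, Finset.sum_congr rfl hM, Finset.sum_neg_distrib,
      Finset.sum_Ico_sub M k.isLt.le]
    simp [M]

theorem coe_closure_prefixExponent :
    (closure (Set.range prefixExponent ∪ {-∑ j : Fin n, single j 1}) : Set (Fin n →₀ ℤ)) =
      {μ : Fin n →₀ ℤ | Antitone (μ : Fin n → ℤ)} := by
  apply subset_antisymm
  · intro μ hμ
    induction hμ using closure_induction with
    | mem ν hν =>
      rcases hν with ⟨i, rfl⟩ | rfl
      · exact antitone_prefixExponent i
      · intro a b _
        simp [single_apply]
    | zero => exact antitone_const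
    | add μ₁ μ₂ _ _ h₁ h₂ =>
      show Antitone ⇑(μ₁ + μ₂)
      rw [Finsupp.coe_add]
      exact h₁.add h₂
  · intro μ (hμ : Antitone (μ : Fin n → ℤ))
    obtain ⟨c, hc, rfl⟩ := exists_eq_sum_smul_prefixExponent hμ
    refine sum_mem fun i _ => ?_
    have hgen : prefixExponent i ∈
        closure (Set.range prefixExponent ∪ {-∑ j : Fin n, single j 1}) :=
      AddSubmonoid.subset_closure (.inl ⟨i, rfl⟩)
    by_cases hi : (i : ℕ) + 1 < n
    · exact zsmul_mem_of_nonneg hgen (hc i hi)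
    · refine zsmul_mem_of_neg_mem hgen ?_ _
      rw [prefixExponent_of_not_lt hi]
      exact AddSubmonoid.subset_closure (.inr rfl)

end Prefix

theorem stmt16_general {F : Type*} [Field F] {n : ℕ} :
    let L := AddMonoidAlgebra F (Fin n →₀ ℤ)
    let x : Fin n → L := fun j => AddMonoidAlgebra.single (Finsupp.single j (1 : ℤ)) 1
    let xinv : Fin n → L := fun j => AddMonoidAlgebra.single (Finsupp.single j (-1 : ℤ)) 1
    let A : ∀ i : Fin n, ((i : ℕ) + 1 < n) → Subalgebra F L := fun i h =>
      Algebra.adjoin F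
        ({l | ∃ j : Fin n, j ≠ i ∧ j ≠ ⟨(i : ℕ) + 1, h⟩ ∧ (l = x j ∨ l = xinv j)} ∪
          {x i} ∪ {x i * x ⟨(i : ℕ) + 1, h⟩, xinv i * xinv ⟨(i : ℕ) + 1, h⟩})
    let domSpan : Submodule F L := Submodule.span F
      {l | ∃ μ : Fin n →₀ ℤ, Antitone (⇑μ : Fin n → ℤ) ∧ l = AddMonoidAlgebra.single μ 1}
    let y : Fin n → L := fun i =>
      AddMonoidAlgebra.single
        (∑ j ∈ Finset.univ.filter (fun j : Fin n => (j : ℕ) ≤ (i : ℕ)),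
          Finsupp.single j (1 : ℤ)) 1
    let yninv : L := AddMonoidAlgebra.single (-(∑ j : Fin n, Finsupp.single j (1 : ℤ))) 1
    (∀ z : L, (∀ (i : Fin n) (h : (i : ℕ) + 1 < n), z ∈ A i h) ↔ z ∈ domSpan) ∧
    domSpan = Subalgebra.toSubmodule (Algebra.adjoin F (Set.range y ∪ {yninv})) := by
  intro L x xinv A domSpan y yninv
  have hdom : domSpan = AddMonoidAlgebra.supported F F {μ : Fin n →₀ ℤ | Antitone μ} :=
    AddMonoidAlgebra.span_setOf_single_one_eq_supported _
  refine ⟨fun z => ?_, ?_⟩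
  · have hA : ∀ i h, z ∈ A i h ↔ ∀ μ ∈ z.coeff.support, μ ⟨(i : ℕ) + 1, h⟩ ≤ μ i :=
      fun i h => by
        have hne : i ≠ ⟨(i : ℕ) + 1, h⟩ := by simp [Fin.ext_iff]
        have hgen : A i h = Algebra.adjoin F
            ((AddMonoidAlgebra.single · (1 : F)) '' generatorExponents i ⟨(i : ℕ) + 1, h⟩) :=
          congrArg (Algebra.adjoin F) (image_single_one_generatorExponents i _).symm
        rw [hgen, AddMonoidAlgebra.mem_adjoin_single_one_image,
          coe_closure_generatorExponents hne]
        rfl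
    rw [hdom, AddMonoidAlgebra.mem_supported]
    simp only [hA]
    exact ⟨fun h μ hμ => Fin.antitone_iff_mk_succ_le.2 fun i hi => h i hi μ hμ,
      fun h i hi μ hμ => Fin.antitone_iff_mk_succ_le.1 (h hμ) i hi⟩
  · have hy : Set.range y ∪ {yninv} = (AddMonoidAlgebra.single · (1 : F)) ''
        (Set.range prefixExponent ∪ {-∑ j : Fin n, Finsupp.single j 1}) := by
      rw [Set.image_union, Set.image_singleton, ← Set.range_comp]
      rfl
    rw [hdom, hy, AddMonoidAlgebra.toSubmodule_adjoin_single_one_image,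
      coe_closure_prefixExponent]

/-- Inside the Laurent polynomial ring `F[x_1^{±1},…,x_n^{±1}]`, for each `1 ≤ i ≤ n−1`
let `A_i` be the subalgebra generated by `x_j^{±1}` for `j ∉ {i, i+1}`, by `x_i`, and by
`(x_i x_{i+1})^{±1}`. Then `∩_i A_i` equals the `F`-span of the monomials `x^μ` with
`μ_1 ≥ μ_2 ≥ ⋯ ≥ μ_n`, which is the free polynomial-Laurent algebra
`F[y_1,…,y_{n−1},y_n^{±1}]` with `y_i = x_1⋯x_i` (the subalgebra generated by the `y_i`
together with `y_n^{-1}`). -/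
theorem stmt16 {F : Type*} [Field F] {n : ℕ} (hn : 2 ≤ n) :
    let L := AddMonoidAlgebra F (Fin n →₀ ℤ)
    let x : Fin n → L := fun j => AddMonoidAlgebra.single (Finsupp.single j (1 : ℤ)) 1
    let xinv : Fin n → L := fun j => AddMonoidAlgebra.single (Finsupp.single j (-1 : ℤ)) 1
    let A : ∀ i : Fin n, ((i : ℕ) + 1 < n) → Subalgebra F L := fun i h =>
      Algebra.adjoin F
        ({l | ∃ j : Fin n, j ≠ i ∧ j ≠ ⟨(i : ℕ) + 1, h⟩ ∧ (l = x j ∨ l = xinv j)} ∪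
          {x i} ∪ {x i * x ⟨(i : ℕ) + 1, h⟩, xinv i * xinv ⟨(i : ℕ) + 1, h⟩})
    let domSpan : Submodule F L := Submodule.span F
      {l | ∃ μ : Fin n →₀ ℤ, Antitone (⇑μ : Fin n → ℤ) ∧ l = AddMonoidAlgebra.single μ 1}
    let y : Fin n → L := fun i =>
      AddMonoidAlgebra.single
        (∑ j ∈ Finset.univ.filter (fun j : Fin n => (j : ℕ) ≤ (i : ℕ)),
          Finsupp.single j (1 : ℤ)) 1
    let yninv : L := AddMonoidAlgebra.single (-(∑ j : Fin n, Finsupp.single j (1 : ℤ))) 1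
    (∀ z : L, (∀ (i : Fin n) (h : (i : ℕ) + 1 < n), z ∈ A i h) ↔ z ∈ domSpan) ∧
    domSpan = Subalgebra.toSubmodule (Algebra.adjoin F (Set.range y ∪ {yninv})) :=
  stmt16_general
end
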